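/- The polynomial p(n) = (n³ − 19)(n² + n + 1) has a root modulo m for every positive integer m; that is, for every m ≥ 1 there exists an integer n with p(n) ≡ 0 (mod m). -/

import Mathlib

/-!
By the Chinese remainder theorem it suffices to find a root modulo every prime power `p ^ k`,
and one of the two factors always has one.  If `p ≡ 1 [MOD 3]`, the group `(ZMod p)ˣ` has an
element of order `3`, i.e. a root of `X ^ 2 + X + 1`; it is simple because the discriminant `-3`
is a unit, so Hensel's lemma lifts it.  If `p ≡ 2 [MOD 3]`, then `3` is prime to
`φ (p ^ k) = p ^ (k - 1) * (p - 1)`, so cubing is a bijection of `(ZMod (p ^ k))ˣ` and `19` is a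
cube.  For `p = 3`, Hensel's lemma in the form `‖f a‖ < ‖f' a‖ ^ 2` applies to `X ^ 3 - 19` at `7`.
-/

open Polynomial

def HasRootMod (f : ℤ[X]) (m : ℤ) : Prop := ∃ n : ℤ, m ∣ f.eval n

theorem dvd_eval_of_dvd_sub {f : ℤ[X]} {m x y : ℤ} (hxy : m ∣ x - y) (hy : m ∣ f.eval y) :
    m ∣ f.eval x := by
  simpa using dvd_add (hxy.trans (sub_dvd_eval_sub x y f)) hy

theorem HasRootMod.mul_of_isCoprime {f : ℤ[X]} {a b : ℤ} (hab : IsCoprime a b)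
    (ha : HasRootMod f a) (hb : HasRootMod f b) : HasRootMod f (a * b) := by
  obtain ⟨x, hx⟩ := ha
  obtain ⟨y, hy⟩ := hb
  obtain ⟨u, v, huv⟩ := hab
  refine ⟨x * v * b + y * u * a, IsCoprime.mul_dvd ⟨u, v, huv⟩ ?_ ?_⟩
  · exact dvd_eval_of_dvd_sub ⟨u * (y - x), by linear_combination x * huv⟩ hx
  · exact dvd_eval_of_dvd_sub ⟨v * (x - y), by linear_combination y * huv⟩ hy

theorem HasRootMod.mul_right {f : ℤ[X]} {m : ℤ} (h : HasRootMod f m) (g : ℤ[X]) :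
    HasRootMod (f * g) m := by
  obtain ⟨n, hn⟩ := h
  exact ⟨n, by simpa using hn.mul_right _⟩

theorem HasRootMod.mul_left {g : ℤ[X]} {m : ℤ} (h : HasRootMod g m) (f : ℤ[X]) :
    HasRootMod (f * g) m := by
  obtain ⟨n, hn⟩ := h
  exact ⟨n, by simpa using hn.mul_left _⟩

theorem HasRootMod.of_prime_pow {f : ℤ[X]}
    (h : ∀ p k : ℕ, p.Prime → 0 < k → HasRootMod f ((p : ℤ) ^ k)) {m : ℕ} (hm : m ≠ 0) :
    HasRootMod f m := by
  induction m using Nat.recOnPosPrimePosCoprime with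
  | prime_pow p k hp hk => exact_mod_cast h p k hp hk
  | zero => exact absurd rfl hm
  | one => exact ⟨0, by simp⟩
  | coprime a b ha hb hab iha ihb =>
    push_cast
    exact (iha (by omega)).mul_of_isCoprime (Nat.isCoprime_iff_coprime.2 hab) (ihb (by omega))

theorem hasRootMod_pow_of_aeval_eq_zero {p : ℕ} [Fact p.Prime] {f : ℤ[X]} {z : ℤ_[p]}
    (hz : f.aeval z = 0) (k : ℕ) : HasRootMod f ((p : ℤ) ^ k) := by
  obtain ⟨n, hn⟩ := ZMod.intCast_surjective (PadicInt.toZModPow k z)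
  refine ⟨n, ?_⟩
  rw [← Nat.cast_pow, ← ZMod.intCast_zmod_eq_zero_iff_dvd]
  calc ((f.eval n : ℤ) : ZMod (p ^ k)) = aeval (PadicInt.toZModPow k z) f := by
        simp [← hn, aeval_def]
    _ = PadicInt.toZModPow k (aeval z f) :=
        aeval_algHom_apply (PadicInt.toZModPow k).toIntAlgHom z f
    _ = 0 := by rw [hz, map_zero]

-- The condition `‖f a‖ < ‖f' a‖ ^ 2` of Hensel's lemma in `ℤ_[p]`, in terms of divisibility.
theorem hasRootMod_pow_of_dvd_eval {p : ℕ} [Fact p.Prime] {f : ℤ[X]} {a : ℤ} {e : ℕ}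
    (hf : (p : ℤ) ^ (2 * e + 1) ∣ f.eval a) (hf' : ¬ (p : ℤ) ^ (e + 1) ∣ f.derivative.eval a)
    (k : ℕ) : HasRootMod f ((p : ℤ) ^ k) := by
  have hp : (1 : ℝ) < p := by exact_mod_cast (Fact.out : p.Prime).one_lt
  have hval : ‖((f.eval a : ℤ) : ℤ_[p])‖ ≤ (p : ℝ) ^ (-(2 * e + 1 : ℕ) : ℤ) :=
    PadicInt.norm_int_le_pow_iff_dvd.2 hf
  have hder : (p : ℝ) ^ (-e : ℤ) ≤ ‖((f.derivative.eval a : ℤ) : ℤ_[p])‖ := by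
    rw [← not_lt, show (-e : ℤ) = -(e + 1 : ℕ) + 1 by push_cast; ring,
      ← PadicInt.norm_le_pow_iff_norm_lt_pow_add_one, PadicInt.norm_int_le_pow_iff_dvd]
    exact hf'
  have hnorm : ‖f.aeval (a : ℤ_[p])‖ < ‖f.derivative.aeval (a : ℤ_[p])‖ ^ 2 := by
    simp only [aeval_def, algebraMap_int_eq, eval₂_at_intCast, Int.cast_id, eq_intCast]
    calc _ ≤ (p : ℝ) ^ (-(2 * e + 1 : ℕ) : ℤ) := hval
      _ < ((p : ℝ) ^ (-e : ℤ)) ^ 2 := by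
        rw [← zpow_natCast, ← zpow_mul]
        exact zpow_lt_zpow_right₀ hp (by push_cast; linarith)
      _ ≤ _ := by gcongr
  obtain ⟨z, hz, -⟩ := hensels_lemma hnorm
  exact hasRootMod_pow_of_aeval_eq_zero hz k

theorem hasRootMod_X_pow_sub_C {m d c : ℕ} [NeZero m] (hd : d.Coprime m.totient)
    (hc : c.Coprime m) : HasRootMod (X ^ d - C (c : ℤ)) m := by
  have hcard : (Nat.card (ZMod m)ˣ).Coprime d := by
    rw [Nat.card_eq_fintype_card, ZMod.card_units_eq_totient]
    exact hd.symm
  obtain ⟨u, hu⟩ := (powCoprime hcard).surjective (ZMod.unitOfCoprime c hc)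
  obtain ⟨n, hn⟩ := ZMod.intCast_surjective (u : ZMod m)
  refine ⟨n, (ZMod.intCast_zmod_eq_zero_iff_dvd _ m).1 ?_⟩
  have hud : (u : ZMod m) ^ d = c := by
    simpa [powCoprime] using congrArg Units.val hu
  simp [hn, hud]

theorem hasRootMod_X_sq_add_X_add_one {p : ℕ} [Fact p.Prime] (hp : p % 3 = 1) :
    HasRootMod (X ^ 2 + X + 1) p := by
  have hdvd : 3 ∣ Fintype.card (ZMod p)ˣ := by
    rw [ZMod.card_units_eq_totient, Nat.totient_prime Fact.out]
    omega
  obtain ⟨x, hx⟩ := exists_prime_orderOf_dvd_card 3 hdvd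
  have hx3 : (x : ZMod p) ^ 3 = 1 := by
    rw [← Units.val_pow_eq_pow_val, ← hx, pow_orderOf_eq_one, Units.val_one]
  have hx1 : (x : ZMod p) - 1 ≠ 0 := by
    rw [sub_ne_zero, Ne, Units.val_eq_one]
    rintro rfl
    simp at hx
  have hfactor : ((x : ZMod p) - 1) * (x ^ 2 + x + 1) = 0 := by linear_combination hx3
  have hroot := (mul_eq_zero.1 hfactor).resolve_left hx1
  obtain ⟨n, hn⟩ := ZMod.intCast_surjective (x : ZMod p)
  refine ⟨n, (ZMod.intCast_zmod_eq_zero_iff_dvd _ p).1 ?_⟩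
  simpa [hn] using hroot

theorem hasRootMod_X_sq_add_X_add_one_pow {p : ℕ} [Fact p.Prime] (hp : p % 3 = 1) (k : ℕ) :
    HasRootMod (X ^ 2 + X + 1) ((p : ℤ) ^ k) := by
  obtain ⟨a, ha⟩ := hasRootMod_X_sq_add_X_add_one hp
  simp only [eval_add, eval_pow, eval_X, eval_one] at ha
  refine hasRootMod_pow_of_dvd_eval (a := a) (e := 0) (by simpa using ha) ?_ k
  rw [zero_add, pow_one, show (X ^ 2 + X + 1 : ℤ[X]).derivative.eval a = 2 * a + 1 by simp]
  intro hdvd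
  have h3 : (p : ℤ) ∣ 3 := by
    rw [show (3 : ℤ) = 4 * (a ^ 2 + a + 1) - (2 * a + 1) ^ 2 by ring]
    exact dvd_sub (ha.mul_left 4) (dvd_pow hdvd two_ne_zero)
  have := Int.le_of_dvd three_pos h3
  have := (Fact.out : p.Prime).two_le
  omega

theorem hasRootMod_X_pow_three_sub_C_pow {p c k : ℕ} (hp : p.Prime) (hp2 : p % 3 = 2)
    (hc : c.Coprime p) (hk : 0 < k) : HasRootMod (X ^ 3 - C (c : ℤ)) ((p : ℤ) ^ k) := by
  have : NeZero (p ^ k) := ⟨pow_ne_zero _ hp.ne_zero⟩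
  have hd : Nat.Coprime 3 (p ^ k).totient := by
    rw [Nat.totient_prime_pow hp hk]
    refine Nat.Coprime.mul_right (Nat.Coprime.pow_right _ ?_) ?_
    · exact (Nat.coprime_primes Nat.prime_three hp).2 (by omega)
    · exact (Nat.Prime.coprime_iff_not_dvd Nat.prime_three).2 (by omega)
  exact_mod_cast hasRootMod_X_pow_sub_C hd (hc.pow_right k)

theorem hasRootMod_prime_pow {p k : ℕ} (hp : p.Prime) (hk : 0 < k) :
    HasRootMod ((X ^ 3 - C 19) * (X ^ 2 + X + 1)) ((p : ℤ) ^ k) := by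
  have := Fact.mk hp
  have hp3 : p % 3 = 0 → p = 3 := fun h =>
    ((Nat.prime_dvd_prime_iff_eq Nat.prime_three hp).1 (Nat.dvd_of_mod_eq_zero h)).symm
  rcases (show p = 3 ∨ p % 3 = 1 ∨ p % 3 = 2 by omega) with rfl | hp1 | hp2
  · -- `X ^ 3 - 19 ≡ (X - 1) ^ 3` mod `3`, but at `7` the Hensel condition holds:
    -- `7 ^ 3 - 19 = 4 * 3 ^ 4` and `3 * 7 ^ 2 = 3 * 49`.
    exact (hasRootMod_pow_of_dvd_eval (a := 7) (e := 1) (by norm_num) (by norm_num) k).mul_right _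
  · exact (hasRootMod_X_sq_add_X_add_one_pow hp1 k).mul_left _
  · have h19 : Nat.Coprime 19 p := (Nat.coprime_primes (by norm_num) hp).2 (by omega)
    exact_mod_cast (hasRootMod_X_pow_three_sub_C_pow hp hp2 h19 hk).mul_right _

theorem stmt_5 : ∀ m : ℕ, 1 ≤ m → ∃ n : ℤ,
    (m : ℤ) ∣ (n ^ 3 - 19) * (n ^ 2 + n + 1) := by
  intro m hm
  simpa [HasRootMod] using HasRootMod.of_prime_pow (fun p k hp hk => hasRootMod_prime_pow hp hk)
    (Nat.one_le_iff_ne_zero.1 hm)
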